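/- arXiv:2006.01810 — 4 statements merged into one kernel-verified Lean document; each statement's English description precedes it below -/
import Mathlib

section
/- Let k be algebraically closed of characteristic zero and let A ∈ SL_4(k), B ∈ SL_4(k) each be diagonalizable with exactly two distinct eigenvalues, each of multiplicity 2. Then the pair (A, B) generates a reducible representation of the free group F₂ on k⁴, i.e., there is a proper nonzero subspace invariant under both A and B. -/
/-!
Each of the two maps is `ν + (μ - ν) e` for an idempotent `e` (the projection onto its
`μ`-eigenspace along its `ν`-eigenspace), so it suffices to find a small common invariant subspace
of two idempotents `P` and `Q`. The map `PQ` preserves `range P`, so over an algebraically closed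
field it has an eigenvector `x ∈ range P`. Then `Px = x`, `PQx = λx` and `Q² = Q` make `span {x, Qx}`
invariant under both `P` and `Q`, and its dimension is at most `2 < 4`.
-/

/-- A square matrix is diagonalizable if it is conjugate to a diagonal matrix. -/
def IsDiagonalizableMat {r : ℕ} {k : Type*} [Field k] (A : Matrix (Fin r) (Fin r) k) : Prop :=
  ∃ P : Matrix (Fin r) (Fin r) k, IsUnit P ∧ (P⁻¹ * A * P).IsDiag

open Module Module.End Submodule

lemma isIdempotentElem_inv_smul_sub_smul_one {k R : Type*} [Field k] [Ring R] [Algebra k R]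
    {a : R} {μ ν : k} (hμν : μ ≠ ν) (h : (a - μ • 1) * (a - ν • 1) = 0) :
    IsIdempotentElem ((μ - ν)⁻¹ • (a - ν • 1)) := by
  have hsq : (a - ν • 1) * (a - ν • 1) = (μ - ν) • (a - ν • 1) := by
    rw [← sub_eq_zero, ← h]
    simp only [sub_smul, mul_sub, sub_mul, smul_mul_assoc, mul_smul_comm, one_mul, mul_one,
      smul_sub, smul_smul, mul_comm μ ν]
    abel
  rw [IsIdempotentElem, smul_mul_smul_comm, hsq, smul_smul,
    inv_mul_cancel_right₀ (sub_ne_zero.mpr hμν)]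

namespace Module.End

variable {k V : Type*} [Field k] [AddCommGroup V] [Module k V]

lemma eigenspace_sup_eigenspace_eq_top [FiniteDimensional k V] (f : End k V) {μ ν : k}
    (hμν : μ ≠ ν) (h : finrank k V ≤ finrank k (f.eigenspace μ) + finrank k (f.eigenspace ν)) :
    f.eigenspace μ ⊔ f.eigenspace ν = ⊤ :=
  eq_top_of_disjoint _ _ h (f.disjoint_genEigenspace hμν 1 1)

lemma sub_smul_one_mul_sub_smul_one_eq_zero (f : End k V) {μ ν : k}
    (h : f.eigenspace μ ⊔ f.eigenspace ν = ⊤) : (f - μ • 1) * (f - ν • 1) = 0 := by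
  refine LinearMap.ker_eq_top.mp (eq_top_iff.mpr (h ▸ sup_le ?_ ?_)) <;> intro v hv <;>
    simp [mem_eigenspace_iff.mp hv, smul_sub, smul_smul, mul_comm]

lemma ne_smul_one_of_eigenspace_ne_top {f : End k V} {μ : k} (h : f.eigenspace μ ≠ ⊤) :
    f ≠ μ • 1 := by
  rintro rfl
  simp [eigenspace_def] at h

lemma invtSubmodule_smul_sub_smul_one (f : End k V) {c : k} (hc : c ≠ 0) (ν : k) :
    (c • (f - ν • 1)).invtSubmodule = f.invtSubmodule := by
  refine Sublattice.ext fun H => ?_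
  simp only [mem_invtSubmodule_iff_forall_mem_of_mem, LinearMap.smul_apply, LinearMap.sub_apply,
    one_apply, H.smul_mem_iff hc]
  exact forall₂_congr fun x hx => H.sub_mem_iff_left (H.smul_mem ν hx)

lemma span_pair_mem_invtSubmodule {P Q : End k V} (hQ : IsIdempotentElem Q) {x : V} {μ : k}
    (hPx : P x = x) (hPQx : P (Q x) = μ • x) :
    span k {x, Q x} ∈ P.invtSubmodule ∧ span k {x, Q x} ∈ Q.invtSubmodule := by
  have hx : x ∈ span k {x, Q x} := subset_span (Set.mem_insert _ _)
  have hQx : Q x ∈ span k {x, Q x} := subset_span (Set.mem_insert_of_mem _ rfl)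
  have hQQx : Q (Q x) = Q x := congrArg (· x) hQ.eq
  constructor <;>
    rw [mem_invtSubmodule, span_le, Set.insert_subset_iff, Set.singleton_subset_iff]
  · exact ⟨mem_comap.mpr (by rwa [hPx]), mem_comap.mpr (by rw [hPQx]; exact smul_mem _ μ hx)⟩
  · exact ⟨mem_comap.mpr hQx, mem_comap.mpr (by rwa [hQQx])⟩

variable [IsAlgClosed k] [FiniteDimensional k V]

lemma exists_apply_eq_self_and_apply_apply_eq_smul {P : End k V} (hP : IsIdempotentElem P)
    (hP0 : P ≠ 0) (Q : End k V) : ∃ x ≠ 0, P x = x ∧ ∃ μ : k, P (Q x) = μ • x := by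
  have hPQ : ∀ x ∈ LinearMap.range P, (P * Q) x ∈ LinearMap.range P :=
    fun x _ => LinearMap.mem_range_self P (Q x)
  have : Nontrivial (LinearMap.range P) :=
    nontrivial_iff_ne_bot.mpr (LinearMap.range_eq_bot.not.mpr hP0)
  obtain ⟨μ, hμ⟩ := exists_eigenvalue ((P * Q).restrict hPQ)
  obtain ⟨⟨x, hxP⟩, hx⟩ := hμ.exists_hasEigenvector
  exact ⟨x, fun h => hx.2 (Subtype.ext h), (LinearMap.IsIdempotentElem.mem_range_iff hP).mp hxP,
    μ, congrArg Subtype.val hx.apply_eq_smul⟩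

theorem exists_invtSubmodule_finrank_le_two_of_isIdempotentElem {P Q : End k V}
    (hP : IsIdempotentElem P) (hQ : IsIdempotentElem Q) (hP0 : P ≠ 0) :
    ∃ H : Submodule k V, H ≠ ⊥ ∧ finrank k H ≤ 2 ∧ H ∈ P.invtSubmodule ∧ H ∈ Q.invtSubmodule := by
  obtain ⟨x, hx0, hPx, μ, hPQx⟩ := exists_apply_eq_self_and_apply_apply_eq_smul hP hP0 Q
  refine ⟨span k {x, Q x}, ?_, ?_, span_pair_mem_invtSubmodule hQ hPx hPQx⟩
  · exact span_eq_bot.not.mpr fun h => hx0 (h x (Set.mem_insert _ _))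
  · classical
    calc finrank k (span k {x, Q x}) ≤ ({x, Q x} : Set V).toFinset.card := finrank_span_le_card _
      _ ≤ 2 := by simpa using Finset.card_le_two

theorem exists_invtSubmodule_of_sub_smul_one_mul_sub_smul_one_eq_zero (hV : 2 < finrank k V)
    {a b : End k V} {μ ν μ' ν' : k} (hμν : μ ≠ ν) (ha : (a - μ • 1) * (a - ν • 1) = 0)
    (hμν' : μ' ≠ ν') (hb : (b - μ' • 1) * (b - ν' • 1) = 0) (hb0 : b ≠ ν' • 1) :
    ∃ H : Submodule k V, H ≠ ⊥ ∧ H ≠ ⊤ ∧ H ∈ a.invtSubmodule ∧ H ∈ b.invtSubmodule := by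
  have hc := inv_ne_zero (sub_ne_zero.mpr hμν)
  have hc' := inv_ne_zero (sub_ne_zero.mpr hμν')
  obtain ⟨H, hH0, hH2, hHb, hHa⟩ := exists_invtSubmodule_finrank_le_two_of_isIdempotentElem
    (isIdempotentElem_inv_smul_sub_smul_one hμν' hb) (isIdempotentElem_inv_smul_sub_smul_one hμν ha)
    (smul_ne_zero hc' (sub_ne_zero.mpr hb0))
  refine ⟨H, hH0, fun hH => ?_, invtSubmodule_smul_sub_smul_one a hc ν ▸ hHa,
    invtSubmodule_smul_sub_smul_one b hc' ν' ▸ hHb⟩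
  rw [hH, finrank_top] at hH2
  omega

end Module.End

theorem sl4_two_double_eigenvalues_reducible_general {k : Type*} [Field k] [IsAlgClosed k]
    (A B : Matrix (Fin 4) (Fin 4) k)
    (ε₁ ε₂ : k) (hε : ε₁ ≠ ε₂)
    (hA1 : Module.finrank k (Module.End.eigenspace A.mulVecLin ε₁) = 2)
    (hA2 : Module.finrank k (Module.End.eigenspace A.mulVecLin ε₂) = 2)
    (ε₁' ε₂' : k) (hε' : ε₁' ≠ ε₂')
    (hB1 : Module.finrank k (Module.End.eigenspace B.mulVecLin ε₁') = 2)
    (hB2 : Module.finrank k (Module.End.eigenspace B.mulVecLin ε₂') = 2) :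
    ∃ H : Submodule k (Fin 4 → k), H ≠ ⊥ ∧ H ≠ ⊤ ∧
      ∀ v ∈ H, A.mulVec v ∈ H ∧ B.mulVec v ∈ H := by
  have hV : finrank k (Fin 4 → k) = 4 := by simp
  have hA := sub_smul_one_mul_sub_smul_one_eq_zero _
    (eigenspace_sup_eigenspace_eq_top A.mulVecLin hε (by omega))
  have hB := sub_smul_one_mul_sub_smul_one_eq_zero _
    (eigenspace_sup_eigenspace_eq_top B.mulVecLin hε' (by omega))
  have hB0 : B.mulVecLin ≠ ε₂' • 1 := ne_smul_one_of_eigenspace_ne_top fun h => by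
    rw [h, finrank_top, hV] at hB2
    omega
  obtain ⟨H, hH0, hHtop, hHA, hHB⟩ :=
    exists_invtSubmodule_of_sub_smul_one_mul_sub_smul_one_eq_zero (by omega) hε hA hε' hB hB0
  exact ⟨H, hH0, hHtop, fun v hv => ⟨hHA hv, hHB hv⟩⟩

/-- Proposition 8.1: if `A, B ∈ SL_4(k)` are diagonalizable, each with exactly two
distinct eigenvalues of multiplicity `2`, then the pair `(A, B)` generates a
reducible representation of the free group `F₂` on `k⁴`: there is a proper nonzero
subspace invariant under both `A` and `B`. -/
theorem sl4_two_double_eigenvalues_reducible {k : Type*} [Field k] [IsAlgClosed k] [CharZero k]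
    (A B : Matrix (Fin 4) (Fin 4) k) (hA : A.det = 1) (hB : B.det = 1)
    (hAd : IsDiagonalizableMat A) (hBd : IsDiagonalizableMat B)
    (ε₁ ε₂ : k) (hε : ε₁ ≠ ε₂)
    (hA1 : Module.finrank k (Module.End.eigenspace A.mulVecLin ε₁) = 2)
    (hA2 : Module.finrank k (Module.End.eigenspace A.mulVecLin ε₂) = 2)
    (ε₁' ε₂' : k) (hε' : ε₁' ≠ ε₂')
    (hB1 : Module.finrank k (Module.End.eigenspace B.mulVecLin ε₁') = 2)
    (hB2 : Module.finrank k (Module.End.eigenspace B.mulVecLin ε₂') = 2) :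
    ∃ H : Submodule k (Fin 4 → k), H ≠ ⊥ ∧ H ≠ ⊤ ∧
      ∀ v ∈ H, A.mulVec v ∈ H ∧ B.mulVec v ∈ H :=
  sl4_two_double_eigenvalues_reducible_general A B ε₁ ε₂ hε hA1 hA2 ε₁' ε₂' hε' hB1 hB2
end

section
/- If gcd(n, r) = 1, then for any k ∈ ℤ_r and l ∈ ℤ_n, the cardinality of Ñ_{n,r}(k,l) = {(x₁,...,x_r) ∈ (ℤ_{nr})^r : n·x_i ≡ k (mod r) for all i, x₁+...+x_r ≡ l (mod n)} equals n^{r-1}; in particular it is independent of k and l. -/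
/-!
By the Chinese remainder theorem `ZMod (n * r) ≃+* ZMod n × ZMod r`, so a tuple `x` splits into
its reductions mod `n` and mod `r`, and the two defining conditions each see only one of them.
As `n` is a unit mod `r`, the reduction mod `r` is forced to be the constant tuple `n⁻¹ k`; the
reduction mod `n` is any tuple with sum `l`, which is determined by its first `r - 1` entries.
-/

open ZMod

theorem IsUnit.card_subtype_forall_mul_eq {ι M : Type*} [Monoid M] {a : M} (ha : IsUnit a)
    (k : M) : Nat.card {w : ι → M // ∀ i, a * w i = k} = 1 := by
  obtain ⟨u, rfl⟩ := ha
  have : Unique {w : ι → M // ∀ i, (u : M) * w i = k} :=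
    { default := ⟨fun _ => ↑u⁻¹ * k, fun _ => u.mul_inv_cancel_left k⟩
      uniq := fun w => Subtype.ext <| funext fun i => u.eq_inv_mul_iff_mul_eq.mpr (w.2 i) }
  exact Nat.card_unique

theorem Fin.card_subtype_sum_eq {A : Type*} [AddCommGroup A] (m : ℕ) (l : A) :
    Nat.card {y : Fin (m + 1) → A // ∑ i, y i = l} = Nat.card A ^ m := by
  have e : {y : Fin (m + 1) → A // ∑ i, y i = l} ≃ (Fin m → A) :=
    { toFun := fun y => Fin.init y.1
      invFun := fun w => ⟨Fin.snoc w (l - ∑ i, w i), by simp [Fin.sum_univ_castSucc]⟩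
      left_inv := fun ⟨y, hy⟩ => by
        rw [Fin.sum_univ_castSucc] at hy
        have hlast : l - ∑ i, Fin.init y i = y (Fin.last m) := by
          rw [← hy]; exact add_sub_cancel_left _ _
        simp only [hlast, Fin.snoc_init_self]
      right_inv := fun w => Fin.init_snoc _ _ }
  rw [Nat.card_congr e, Nat.card_fun, Nat.card_fin]

theorem ZMod.chineseRemainder_apply {n r : ℕ} (h : n.Coprime r) (y : ZMod (n * r)) :
    chineseRemainder h y =
      (castHom (dvd_mul_right n r) (ZMod n) y, castHom (dvd_mul_left r n) (ZMod r) y) :=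
  RingHom.congr_fun (RingHom.ext_zmod (chineseRemainder h : ZMod (n * r) →+* ZMod n × ZMod r)
    ((castHom _ _).prod (castHom _ _))) y

theorem tildeN_card_general {n r : ℕ} (hr : 0 < r) (h : Nat.Coprime n r)
    (k : ZMod r) (l : ZMod n) :
    Nat.card
      {x : Fin r → ZMod (n * r) //
        (∀ i, ZMod.castHom (dvd_mul_left r n) (ZMod r) ((n : ZMod (n * r)) * x i) = k) ∧
        ZMod.castHom (dvd_mul_right n r) (ZMod n) (∑ i, x i) = l} = n ^ (r - 1) := by
  obtain ⟨m, rfl⟩ := Nat.exists_eq_add_one_of_ne_zero hr.ne'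
  let crt := (Equiv.piCongrRight fun _ : Fin (m + 1) => (chineseRemainder h).toEquiv).trans
    (Equiv.arrowProdEquivProdArrow _ _ _)
  calc _ = Nat.card ({y : Fin (m + 1) → ZMod n // ∑ i, y i = l} ×
          {w : Fin (m + 1) → ZMod (m + 1) // ∀ i, (n : ZMod (m + 1)) * w i = k}) :=
        Nat.card_congr <| (crt.subtypeEquiv fun x => by
          simp [crt, chineseRemainder_apply, and_comm]).trans Equiv.subtypeProdEquivProd
    _ = n ^ m := by
      rw [Nat.card_prod, ((isUnit_iff_coprime n _).mpr h).card_subtype_forall_mul_eq,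
        Fin.card_subtype_sum_eq, Nat.card_zmod, mul_one]

/-- Corollary 6.8: if `gcd(n,r) = 1`, then for any `k ∈ ℤ_r` and `l ∈ ℤ_n` the
cardinality of `Ñ_{n,r}(k,l) = {(x₁,...,x_r) ∈ (ℤ_{nr})^r : n·x_i ≡ k (mod r),
Σ x_i ≡ l (mod n)}` equals `n^{r-1}`; in particular it is independent of `k`, `l`. -/
theorem tildeN_card {n r : ℕ} (hn : 0 < n) (hr : 0 < r) (h : Nat.Coprime n r)
    (k : ZMod r) (l : ZMod n) :
    Nat.card
      {x : Fin r → ZMod (n * r) //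
        (∀ i, ZMod.castHom (dvd_mul_left r n) (ZMod r) ((n : ZMod (n * r)) * x i) = k) ∧
        ZMod.castHom (dvd_mul_right n r) (ZMod n) (∑ i, x i) = l} = n ^ (r - 1) :=
  tildeN_card_general hr h k l
end

section
/- For n, r positive integers with gcd(n,r) = 1 and l, l' ∈ ℤ_n, the map (x₁,...,x_r) ↦ (x₁ + c, ..., x_r + c), where c ∈ ℤ_{nr} reduces mod n to r^{-1}(l' − l), gives a bijection between Ñ_{n,r}(0, l) and Ñ_{n,r}(0, l'). -/
/-!
Translating every coordinate by `c` leaves each `n·xᵢ mod r` unchanged, because `n·c ≡ 0 (mod r)`,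
and shifts the sum mod `n` by `r·c`. Since `r` is a unit mod `n`, the choice `c ≡ r⁻¹(l' − l)`
makes this shift exactly `l' − l`, and translation is invertible.
-/

open Finset

/-- `Ñ_{n,r}(k, l)`. -/
def tildeN (n r : ℕ) (k : ZMod r) (l : ZMod n) : Set (Fin r → ZMod (n * r)) :=
  {x | (∀ i, ZMod.castHom (dvd_mul_left r n) (ZMod r) ((n : ZMod (n * r)) * x i) = k) ∧
    ZMod.castHom (dvd_mul_right n r) (ZMod n) (∑ i, x i) = l}

theorem map_sum_add_const {R S : Type*} [Semiring R] [Semiring S] (f : R →+* S) {r : ℕ}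
    (x : Fin r → R) (c : R) : f (∑ i, (x i + c)) = f (∑ i, x i) + r * f c := by
  rw [sum_add_distrib, map_add, sum_const, card_univ, Fintype.card_fin, nsmul_eq_mul, map_mul,
    map_natCast]

theorem add_const_mem_tildeN_iff {n r : ℕ} {k : ZMod r} {l : ZMod n} {c : ZMod (n * r)}
    (hc : ZMod.castHom (dvd_mul_left r n) (ZMod r) ((n : ZMod (n * r)) * c) = 0)
    (x : Fin r → ZMod (n * r)) :
    (fun i => x i + c) ∈ tildeN n r k (l + r * ZMod.castHom (dvd_mul_right n r) (ZMod n) c) ↔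
      x ∈ tildeN n r k l := by
  simp only [tildeN, Set.mem_ofPred_eq, mul_add, map_add, hc, add_zero, map_sum_add_const,
    add_left_inj]

theorem natCast_mul_inv_mul {n r : ℕ} (h : Nat.Coprime n r) (a : ZMod n) :
    (r : ZMod n) * ((r : ZMod n)⁻¹ * a) = a := by
  rw [← mul_assoc, ZMod.coe_mul_inv_eq_one r h.symm, one_mul]

theorem tildeN_translation_bijOn_general {n r : ℕ} (h : Nat.Coprime n r)
    (l l' : ZMod n) (c : ZMod (n * r))
    (hc1 : ZMod.castHom (dvd_mul_right n r) (ZMod n) c = (r : ZMod n)⁻¹ * (l' - l))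
    (hc2 : ZMod.castHom (dvd_mul_left r n) (ZMod r) ((n : ZMod (n * r)) * c) = 0) :
    Set.BijOn (fun x : Fin r → ZMod (n * r) => fun i => x i + c)
      {x | (∀ i, ZMod.castHom (dvd_mul_left r n) (ZMod r) ((n : ZMod (n * r)) * x i) = 0) ∧
        ZMod.castHom (dvd_mul_right n r) (ZMod n) (∑ i, x i) = l}
      {x | (∀ i, ZMod.castHom (dvd_mul_left r n) (ZMod r) ((n : ZMod (n * r)) * x i) = 0) ∧
        ZMod.castHom (dvd_mul_right n r) (ZMod n) (∑ i, x i) = l'} := by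
  have hl' : l' = l + r * ZMod.castHom (dvd_mul_right n r) (ZMod n) c := by
    rw [hc1, natCast_mul_inv_mul h, add_sub_cancel]
  change Set.BijOn (Equiv.addRight fun _ => c) (tildeN n r 0 l) (tildeN n r 0 l')
  rw [hl']
  exact (Equiv.addRight _).bijOn (add_const_mem_tildeN_iff hc2)

/-- The translation bijection of Corollary 6.7: for `gcd(n,r) = 1` and `l, l' ∈ ℤ_n`,
the map `(x₁,...,x_r) ↦ (x₁ + c, ..., x_r + c)`, where `c ∈ ℤ_{nr}` reduces mod `n`
to `r⁻¹(l' − l)` and satisfies `n·c ≡ 0 (mod r)`, is a bijection between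
`Ñ_{n,r}(0,l)` and `Ñ_{n,r}(0,l')`. -/
theorem tildeN_translation_bijOn {n r : ℕ} (hn : 0 < n) (hr : 0 < r) (h : Nat.Coprime n r)
    (l l' : ZMod n) (c : ZMod (n * r))
    (hc1 : ZMod.castHom (dvd_mul_right n r) (ZMod n) c = (r : ZMod n)⁻¹ * (l' - l))
    (hc2 : ZMod.castHom (dvd_mul_left r n) (ZMod r) ((n : ZMod (n * r)) * c) = 0) :
    Set.BijOn (fun x : Fin r → ZMod (n * r) => fun i => x i + c)
      {x | (∀ i, ZMod.castHom (dvd_mul_left r n) (ZMod r) ((n : ZMod (n * r)) * x i) = 0) ∧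
        ZMod.castHom (dvd_mul_right n r) (ZMod n) (∑ i, x i) = l}
      {x | (∀ i, ZMod.castHom (dvd_mul_left r n) (ZMod r) ((n : ZMod (n * r)) * x i) = 0) ∧
        ZMod.castHom (dvd_mul_right n r) (ZMod n) (∑ i, x i) = l'} :=
  tildeN_translation_bijOn_general h l l' c hc1 hc2
end

section
/- Let n, r be positive integers and fix a primitive r-th root of unity ψ. Let L(a) = |N^π_{n,r}(ψ^a)| denote the number of unordered r-tuples of pairwise distinct n·r-th roots of unity (ε₁,...,ε_r) with ε_iⁿ = ψ^a for all i and ε₁···ε_r = 1, and let L'(a) denote the analogous count where exactly two of the ε_i coincide (partition {1^{r-2}, 2}). Then L'(a) = −r·L(a) + C(n, r−1), where C denotes the binomial coefficient. -/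
open Finset Polynomial

/-!
Let `A` be the `n` roots of `εⁿ = ψ^a`. Since `(ψ^a)^r = 1`, every `(r-1)`-subset `T ⊆ A` has its
completion `p = (∏ T)⁻¹` in `A`. If `p ∈ T`, then `p ::ₘ T` is a multiset of product one with
exactly one repeated pair, and every such multiset arises once. If `p ∉ T`, then `insert p T` is
an `r`-set of product one with a marked point `p`, and each such set arises `r` times. Counting
all `(r-1)`-subsets gives `C(n, r-1) = L' + r L`.
-/

theorem Multiset.exists_eq_cons_toFinset {α : Type*} [DecidableEq α] {M : Multiset α}
    (h : Multiset.card M = #M.toFinset + 1) : ∃ x ∈ M, M = x ::ₘ M.toFinset.val := by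
  have hle : M.dedup ≤ M := Multiset.dedup_le M
  have hsub : Multiset.card (M - M.dedup) = 1 := by
    rw [Multiset.card_sub hle, h, ← Multiset.toFinset_val, ← Finset.card_def]; omega
  obtain ⟨x, hx⟩ := Multiset.card_eq_one.1 hsub
  have hM : M = x ::ₘ M.toFinset.val := by
    rw [Multiset.toFinset_val, ← Multiset.singleton_add, ← hx, tsub_add_cancel_of_le hle]
  exact ⟨x, hM ▸ Multiset.mem_cons_self _ _, hM⟩

section DivisionCommMonoid

variable {G : Type*} [DivisionCommMonoid G]

theorem pow_inv_prod_eq_of_pow_eq {T : Finset G} {n r : ℕ} {c : G} (hT : ∀ x ∈ T, x ^ n = c)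
    (hcard : #T + 1 = r) (hc : c ^ r = 1) : ((∏ x ∈ T, x)⁻¹) ^ n = c := by
  rw [inv_pow, ← prod_pow, prod_congr rfl hT, prod_const]
  exact inv_eq_of_mul_eq_one_right (by rw [← pow_succ, hcard, hc])

variable [DecidableEq G]

theorem Multiset.eq_inv_prod_toFinset_cons {M : Multiset G}
    (hcard : Multiset.card M = #M.toFinset + 1) (hM : M.prod = 1) :
    (∏ x ∈ M.toFinset, x)⁻¹ ∈ M.toFinset ∧ M = (∏ x ∈ M.toFinset, x)⁻¹ ::ₘ M.toFinset.val := by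
  obtain ⟨x, hxM, hM'⟩ := Multiset.exists_eq_cons_toFinset hcard
  have hx : x = (∏ x ∈ M.toFinset, x)⁻¹ := by
    refine eq_inv_of_mul_eq_one_left ?_
    rw [prod_eq_multiset_prod, Multiset.map_id', ← Multiset.prod_cons, ← hM', hM]
  exact hx ▸ ⟨Multiset.mem_toFinset.2 hxM, hM'⟩

theorem inv_prod_erase_eq {S : Finset G} (hS : ∏ x ∈ S, x = 1) {y : G} (hy : y ∈ S) :
    (∏ x ∈ S.erase y, x)⁻¹ = y :=
  inv_eq_of_mul_eq_one_right (by rw [prod_erase_mul S _ hy, hS])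

end DivisionCommMonoid

section CommGroupWithZero

variable {G : Type*} [CommGroupWithZero G] {A : Finset G}

theorem prod_ne_zero_of_subset (hA0 : 0 ∉ A) {T : Finset G} (hT : T ⊆ A) : ∏ x ∈ T, x ≠ 0 :=
  prod_ne_zero_iff.2 fun _ hx h => hA0 (h ▸ hT hx)

variable [DecidableEq G] {r : ℕ}

theorem natCard_prod_eq_one_eq_card_filter :
    Nat.card {S : Finset G // #S = r ∧ (∀ x ∈ S, x ∈ A) ∧ ∏ x ∈ S, x = 1}
      = #{S ∈ A.powersetCard r | ∏ x ∈ S, x = 1} := by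
  rw [← Nat.card_eq_finsetCard]
  exact Nat.card_congr <| Equiv.subtypeEquivRight fun S => by
    simp only [mem_filter, mem_powersetCard, subset_iff]; tauto

theorem natCard_oneRepeated_eq_card_filter (hr : 0 < r) (hA0 : 0 ∉ A) :
    Nat.card {M : Multiset G // Multiset.card M = r ∧ #M.toFinset = r - 1 ∧
        (∀ x ∈ M, x ∈ A) ∧ M.prod = 1}
      = #{T ∈ A.powersetCard (r - 1) | (∏ x ∈ T, x)⁻¹ ∈ T} := by
  rw [← Nat.card_eq_finsetCard]
  refine Nat.card_congr
    { toFun := fun M => ⟨M.1.toFinset, ?_⟩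
      invFun := fun T => ⟨(∏ x ∈ T.1, x)⁻¹ ::ₘ T.1.val, ?_⟩
      left_inv := ?_
      right_inv := ?_ }
  · obtain ⟨M, hcard, hdistinct, hA, hprod⟩ := M
    have hp := (Multiset.eq_inv_prod_toFinset_cons (by omega) hprod).1
    simp only [mem_filter, mem_powersetCard]
    exact ⟨⟨fun x hx => hA x (Multiset.mem_toFinset.1 hx), hdistinct⟩, hp⟩
  · obtain ⟨T, hT⟩ := T
    simp only [mem_filter, mem_powersetCard] at hT
    obtain ⟨⟨hTA, hTcard⟩, hpT⟩ := hT
    have htoFinset : ((∏ x ∈ T, x)⁻¹ ::ₘ T.val).toFinset = T := by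
      rw [Multiset.toFinset_cons, val_toFinset, insert_eq_self.2 hpT]
    refine ⟨?_, by rw [htoFinset, hTcard], fun x hx => ?_, ?_⟩
    · rw [Multiset.card_cons, ← card_def, hTcard]; omega
    · rcases Multiset.mem_cons.1 hx with rfl | hx
      exacts [hTA hpT, hTA hx]
    · rw [Multiset.prod_cons, ← Multiset.map_id' T.val, ← prod_eq_multiset_prod]
      exact inv_mul_cancel₀ (prod_ne_zero_of_subset hA0 hTA)
  · rintro ⟨M, hcard, hdistinct, -, hprod⟩
    exact Subtype.ext (Multiset.eq_inv_prod_toFinset_cons (by omega) hprod).2.symm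
  · rintro ⟨T, hT⟩
    simp only [mem_filter] at hT
    exact Subtype.ext (by
      simp only [Multiset.toFinset_cons, val_toFinset, insert_eq_self.2 hT.2])

theorem card_filter_inv_prod_notMem (hr : 0 < r) (hA0 : 0 ∉ A)
    (hA : ∀ T ⊆ A, #T = r - 1 → (∏ x ∈ T, x)⁻¹ ∈ A) :
    #{T ∈ A.powersetCard (r - 1) | (∏ x ∈ T, x)⁻¹ ∉ T}
      = r * #{S ∈ A.powersetCard r | ∏ x ∈ S, x = 1} := by
  have hP : ∀ S ∈ {S ∈ A.powersetCard r | ∏ x ∈ S, x = 1}, #S = r :=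
    fun S hS => (mem_powersetCard.1 (mem_filter.1 hS).1).2
  rw [mul_comm, ← sum_const_nat hP, ← card_sigma]
  refine card_nbij' (fun T => ⟨insert (∏ x ∈ T, x)⁻¹ T, (∏ x ∈ T, x)⁻¹⟩)
    (fun S => S.1.erase S.2) ?_ ?_ ?_ ?_
  · intro T hT
    simp only [mem_coe, mem_filter, mem_powersetCard] at hT
    obtain ⟨⟨hTA, hTcard⟩, hpT⟩ := hT
    simp only [mem_coe, mem_sigma, mem_filter, mem_powersetCard, mem_insert_self, and_true]
    refine ⟨⟨insert_subset (hA T hTA hTcard) hTA, ?_⟩, ?_⟩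
    · rw [card_insert_of_notMem hpT, hTcard]; omega
    · rw [prod_insert hpT, inv_mul_cancel₀ (prod_ne_zero_of_subset hA0 hTA)]
  · rintro ⟨S, y⟩ hSy
    simp only [mem_coe, mem_sigma, mem_filter, mem_powersetCard] at hSy
    obtain ⟨⟨⟨hSA, hScard⟩, hprod⟩, hy⟩ := hSy
    simp only [mem_coe, mem_filter, mem_powersetCard, inv_prod_erase_eq hprod hy]
    exact ⟨⟨(erase_subset _ _).trans hSA, by rw [card_erase_of_mem hy, hScard]⟩, notMem_erase _ _⟩
  · intro T hT
    exact erase_insert (mem_filter.1 hT).2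
  · rintro ⟨S, y⟩ hSy
    simp only [mem_coe, mem_sigma, mem_filter] at hSy
    simp only [inv_prod_erase_eq hSy.1.2 hSy.2, insert_erase hSy.2]

theorem natCard_oneRepeated_add_mul_natCard_prod_eq_one (hr : 0 < r) (hA0 : 0 ∉ A)
    (hA : ∀ T ⊆ A, #T = r - 1 → (∏ x ∈ T, x)⁻¹ ∈ A) :
    Nat.card {M : Multiset G // Multiset.card M = r ∧ #M.toFinset = r - 1 ∧
        (∀ x ∈ M, x ∈ A) ∧ M.prod = 1}
      + r * Nat.card {S : Finset G // #S = r ∧ (∀ x ∈ S, x ∈ A) ∧ ∏ x ∈ S, x = 1}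
      = (#A).choose (r - 1) := by
  rw [natCard_oneRepeated_eq_card_filter hr hA0, natCard_prod_eq_one_eq_card_filter,
    ← card_filter_inv_prod_notMem hr hA0 hA, card_filter_add_card_filter_not, card_powersetCard]

end CommGroupWithZero

theorem IsPrimitiveRoot.card_nthRootsFinset_of_exists_pow_eq {R : Type*} [CommRing R] [IsDomain R]
    {ζ : R} {n : ℕ} (hζ : IsPrimitiveRoot ζ n) {c : R} (hc : c ≠ 0) (hroot : ∃ α, α ^ n = c) :
    #(nthRootsFinset n c) = n := by
  classical
  rw [nthRootsFinset_def, Multiset.toFinset_card_of_nodup (hζ.nthRoots_nodup hc),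
    hζ.card_nthRoots, if_pos hroot]

open scoped Classical in
/-- Equation (LLL) of Remark 6.2: with `L(a)` the number of sets of `r` pairwise
distinct `nr`-th roots of unity `ε` with `εⁿ = ψ^a` and product `1`, and `L'(a)` the
number of multisets of `r` such roots with exactly one repeated pair (pattern
`{1^{r-2}, 2}`), one has `L'(a) = −r·L(a) + C(n, r−1)`. -/
theorem count_one_repeated_pair {k : Type*} [Field k] [IsAlgClosed k] [CharZero k]
    (n r : ℕ) (hn : 0 < n) (hr : 0 < r)
    (ψ : k) (hψ : IsPrimitiveRoot ψ r) (a : ℕ) :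
    (Nat.card {M : Multiset k // Multiset.card M = r ∧ M.toFinset.card = r - 1 ∧
        (∀ ε ∈ M, ε ^ n = ψ ^ a) ∧ M.prod = 1} : ℤ)
      = -(r : ℤ) * Nat.card {S : Finset k // S.card = r ∧
          (∀ ε ∈ S, ε ^ n = ψ ^ a) ∧ ∏ ε ∈ S, ε = 1}
        + Nat.choose n (r - 1) := by
  have hψa : ψ ^ a ≠ 0 := pow_ne_zero _ (hψ.ne_zero hr.ne')
  have hψar : (ψ ^ a) ^ r = 1 := by rw [← pow_mul, mul_comm, pow_mul, hψ.pow_eq_one, one_pow]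
  have : NeZero n := ⟨hn.ne'⟩
  obtain ⟨ζ, hζ⟩ := HasEnoughRootsOfUnity.exists_primitiveRoot k n
  have hcard : #(nthRootsFinset n (ψ ^ a)) = n :=
    hζ.card_nthRootsFinset_of_exists_pow_eq hψa (IsAlgClosed.exists_pow_nat_eq _ hn)
  have key := natCard_oneRepeated_add_mul_natCard_prod_eq_one (A := nthRootsFinset n (ψ ^ a)) hr
    (fun h => ne_zero_of_mem_nthRootsFinset hψa h rfl)
    (fun T hT hTcard => (mem_nthRootsFinset hn _).2 <| pow_inv_prod_eq_of_pow_eq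
      (fun x hx => (mem_nthRootsFinset hn _).1 (hT hx)) (by omega) hψar)
  simp only [mem_nthRootsFinset hn, hcard] at key
  rw [← key]
  push_cast
  ring
end
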